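/- Let Δ be the set of all finite products (including the empty product) of matrices from {A_4, A_4ᵀ, A_5, A_6}. Then for every M = [[a,c],[b,d]] ∈ Δ and every k ≥ 1, the polynomial a·f_k + b·h_k + c·t_k + d·g_k (where [[f_k,h_k],[t_k,g_k]] = F_k) is 'good': for every sequence σ of 2k signs, the substitution x_i ↦ σ(2i−1)(1+x_i), y_i ↦ σ(2i)(1+y_i) yields a polynomial whose coefficients are all of the same sign. -/

import Mathlib

open Matrix MvPolynomial

/-- F_k = A^{x_1}B^{y_1}⋯A^{x_k}B^{y_k} as a matrix of polynomials in the
2k variables x_i = X (i,0), y_i = X (i,1). -/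
noncomputable def Fmat (k : ℕ) : Matrix (Fin 2) (Fin 2) (MvPolynomial (Fin k × Fin 2) ℤ) :=
  (List.ofFn (fun i : Fin k =>
    (!![1, 2 * X (i, 0); 0, 1] : Matrix (Fin 2) (Fin 2) (MvPolynomial (Fin k × Fin 2) ℤ)) *
      !![1, 0; -2 * X (i, 1), 1])).prod

namespace Stmt15Aux

/-- all coefficients nonnegative -/
def Nng {τ : Type*} (P : MvPolynomial τ ℤ) : Prop := ∀ m, 0 ≤ P.coeff m

lemma Nng.add {τ : Type*} {P Q : MvPolynomial τ ℤ} (hP : Nng P) (hQ : Nng Q) :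
    Nng (P + Q) := fun m => by
  classical
  rw [coeff_add]; exact add_nonneg (hP m) (hQ m)

lemma Nng.mul {τ : Type*} {P Q : MvPolynomial τ ℤ} (hP : Nng P) (hQ : Nng Q) :
    Nng (P * Q) := fun m => by
  classical
  rw [coeff_mul]; exact Finset.sum_nonneg fun x _ => mul_nonneg (hP _) (hQ _)

lemma Nng.Cc {τ : Type*} {n : ℤ} (h : 0 ≤ n) : Nng (C n : MvPolynomial τ ℤ) := fun m => by
  classical
  rw [coeff_C]; split <;> simp [h]

lemma Nng.Xv {τ : Type*} (v : τ) : Nng (X v : MvPolynomial τ ℤ) := fun m => by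
  classical
  have : (X v : MvPolynomial τ ℤ) = monomial (Finsupp.single v 1) 1 := rfl
  rw [this, coeff_monomial]; split <;> norm_num

/-- the invariant cone -/
abbrev Kp (a b c d : ℤ) : Prop :=
  b + c ≤ a + d ∧ -(a + d) ≤ b + c ∧ b - c ≤ a - d ∧ -(a - d) ≤ b - c

section Main

variable {k : ℕ} (σ : Fin k × Fin 2 → ℤ)

/-- the substituted factor -/
noncomputable def Gm (i : Fin k) : Matrix (Fin 2) (Fin 2) (MvPolynomial (Fin k × Fin 2) ℤ) :=
  !![1 - 4 * (C (σ (i, 0)) * (1 + X (i, 0))) * (C (σ (i, 1)) * (1 + X (i, 1))),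
     2 * (C (σ (i, 0)) * (1 + X (i, 0)));
     -(2 * (C (σ (i, 1)) * (1 + X (i, 1)))), 1]

noncomputable def Tc (a b c d : ℤ)
    (P : Matrix (Fin 2) (Fin 2) (MvPolynomial (Fin k × Fin 2) ℤ)) :
    MvPolynomial (Fin k × Fin 2) ℤ :=
  C a * P 0 0 + C b * P 0 1 + C c * P 1 0 + C d * P 1 1

lemma Tdecomp (i : Fin k) (a b c d : ℤ)
    (P : Matrix (Fin 2) (Fin 2) (MvPolynomial (Fin k × Fin 2) ℤ)) :
    Tc (k := k) a b c d (Gm σ i * P) =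
      Tc (a - 4*a*(σ (i,0))*(σ (i,1)) - 2*(σ (i,1))*c)
         (b - 4*b*(σ (i,0))*(σ (i,1)) - 2*(σ (i,1))*d)
         (2*(σ (i,0))*a + c) (2*(σ (i,0))*b + d) P
      + X (i, 0) * Tc (-(4*a*(σ (i,0))*(σ (i,1)))) (-(4*b*(σ (i,0))*(σ (i,1))))
         (2*(σ (i,0))*a) (2*(σ (i,0))*b) P
      + X (i, 1) * Tc (-(4*a*(σ (i,0))*(σ (i,1))) - 2*(σ (i,1))*c)
         (-(4*b*(σ (i,0))*(σ (i,1))) - 2*(σ (i,1))*d) 0 0 P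
      + X (i, 0) * (X (i, 1) * Tc (-(4*a*(σ (i,0))*(σ (i,1))))
         (-(4*b*(σ (i,0))*(σ (i,1)))) 0 0 P) := by
  simp [Tc, Gm, Matrix.mul_apply, Fin.sum_univ_two, map_sub, map_add, _root_.map_mul,
    map_neg, _root_.map_one, map_ofNat, map_zero]
  ring

lemma Kstep (e f : ℤ) (he : e = 1 ∨ e = -1) (hf : f = 1 ∨ f = -1)
    (a b c d : ℤ) (h : Kp a b c d) :
    Kp (-(e*f)*(a - 4*a*e*f - 2*f*c)) (-(e*f)*(b - 4*b*e*f - 2*f*d))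
       (-(e*f)*(2*e*a + c)) (-(e*f)*(2*e*b + d)) ∧
    Kp (-(e*f)*(-(4*a*e*f))) (-(e*f)*(-(4*b*e*f))) (-(e*f)*(2*e*a)) (-(e*f)*(2*e*b)) ∧
    Kp (-(e*f)*(-(4*a*e*f) - 2*f*c)) (-(e*f)*(-(4*b*e*f) - 2*f*d)) 0 0 ∧
    Kp (-(e*f)*(-(4*a*e*f))) (-(e*f)*(-(4*b*e*f))) 0 0 := by
  obtain ⟨h1, h2, h3, h4⟩ := h
  rcases he with rfl | rfl <;> rcases hf with rfl | rfl <;>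
    refine ⟨⟨by linarith, by linarith, by linarith, by linarith⟩,
      ⟨by linarith, by linarith, by linarith, by linarith⟩,
      ⟨by linarith, by linarith, by linarith, by linarith⟩,
      ⟨by linarith, by linarith, by linarith, by linarith⟩⟩

lemma key (hσ : ∀ v, σ v = 1 ∨ σ v = -1) :
    ∀ (l : List (Fin k)) (a b c d : ℤ), Kp a b c d →
      Nng (C ((l.map (fun i => -(σ (i, 0) * σ (i, 1)))).prod) *
        Tc (k := k) a b c d ((l.map (Gm σ)).prod)) := by
  intro l
  induction l with
  | nil =>
    intro a b c d h
    obtain ⟨h1, h2, h3, h4⟩ := h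
    have hnn : (0:ℤ) ≤ a + d := by linarith
    have h00 : (1 : Matrix (Fin 2) (Fin 2) (MvPolynomial (Fin k × Fin 2) ℤ)) 0 0 = 1 :=
      Matrix.one_apply_eq _
    have h11 : (1 : Matrix (Fin 2) (Fin 2) (MvPolynomial (Fin k × Fin 2) ℤ)) 1 1 = 1 :=
      Matrix.one_apply_eq _
    have h01 : (1 : Matrix (Fin 2) (Fin 2) (MvPolynomial (Fin k × Fin 2) ℤ)) 0 1 = 0 :=
      Matrix.one_apply_ne (by decide)
    have h10 : (1 : Matrix (Fin 2) (Fin 2) (MvPolynomial (Fin k × Fin 2) ℤ)) 1 0 = 0 :=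
      Matrix.one_apply_ne (by decide)
    have : C (((List.nil : List (Fin k)).map (fun i => -(σ (i, 0) * σ (i, 1)))).prod) *
        Tc (k := k) a b c d (((List.nil : List (Fin k)).map (Gm σ)).prod)
        = C (a + d) := by
      simp only [List.map_nil, List.prod_nil, Tc, h00, h01, h10, h11, mul_one, mul_zero,
        _root_.map_one, one_mul, add_zero, map_add]
    rw [this]
    exact Nng.Cc hnn
  | cons i l ih =>
    intro a b c d h
    obtain ⟨K0, K1, K2, K3⟩ := Kstep (σ (i,0)) (σ (i,1)) (hσ (i,0)) (hσ (i,1)) a b c d h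
    set e := σ (i, 0)
    set f := σ (i, 1)
    set s : ℤ := ((l.map (fun j => -(σ (j, 0) * σ (j, 1)))).prod) with hs
    set Pr : Matrix (Fin 2) (Fin 2) (MvPolynomial (Fin k × Fin 2) ℤ) :=
      (l.map (Gm σ)).prod with hPr
    rw [List.map_cons, List.prod_cons, List.map_cons, List.prod_cons]
    have geq : C (-(e * f) * s) * Tc (k := k) a b c d (Gm σ i * Pr)
        = C s * Tc (-(e*f)*(a - 4*a*e*f - 2*f*c)) (-(e*f)*(b - 4*b*e*f - 2*f*d))
            (-(e*f)*(2*e*a + c)) (-(e*f)*(2*e*b + d)) Pr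
        + X (i, 0) * (C s * Tc (-(e*f)*(-(4*a*e*f))) (-(e*f)*(-(4*b*e*f)))
            (-(e*f)*(2*e*a)) (-(e*f)*(2*e*b)) Pr)
        + X (i, 1) * (C s * Tc (-(e*f)*(-(4*a*e*f) - 2*f*c))
            (-(e*f)*(-(4*b*e*f) - 2*f*d)) 0 0 Pr)
        + X (i, 0) * (X (i, 1) * (C s * Tc (-(e*f)*(-(4*a*e*f)))
            (-(e*f)*(-(4*b*e*f))) 0 0 Pr)) := by
      rw [Tdecomp]
      simp only [Tc, map_sub, map_add, _root_.map_mul, map_neg, _root_.map_one,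
        map_ofNat, map_zero]
      ring
    rw [geq]
    refine Nng.add (Nng.add (Nng.add ?_ ?_) ?_) ?_
    · exact ih _ _ _ _ K0
    · exact Nng.mul (Nng.Xv _) (ih _ _ _ _ K1)
    · exact Nng.mul (Nng.Xv _) (ih _ _ _ _ K2)
    · exact Nng.mul (Nng.Xv _) (Nng.mul (Nng.Xv _) (ih _ _ _ _ K3))

lemma sgn_pm (hσ : ∀ v, σ v = 1 ∨ σ v = -1) (l : List (Fin k)) :
    (l.map (fun i => -(σ (i, 0) * σ (i, 1)))).prod = 1 ∨
    (l.map (fun i => -(σ (i, 0) * σ (i, 1)))).prod = -1 := by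
  induction l with
  | nil => left; simp
  | cons i l ih =>
    rw [List.map_cons, List.prod_cons]
    rcases hσ (i, 0) with h0 | h0 <;> rcases hσ (i, 1) with h1 | h1 <;>
      rcases ih with h | h <;> rw [h0, h1, h] <;> norm_num

lemma factor_map (i : Fin k) :
    (AlgHom.mapMatrix (aeval fun v : Fin k × Fin 2 => C (σ v) * (1 + X v)))
      ((!![1, 2 * X (i, 0); 0, 1] : Matrix (Fin 2) (Fin 2) (MvPolynomial (Fin k × Fin 2) ℤ)) *
        !![1, 0; -2 * X (i, 1), 1]) = Gm σ i := by
  ext r s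
  fin_cases r <;> fin_cases s <;>
    simp [AlgHom.mapMatrix_apply, Matrix.map_apply, Gm, Matrix.mul_apply, Fin.sum_univ_two,
      map_add, _root_.map_mul, map_neg, _root_.map_one, map_ofNat, map_zero, aeval_X] <;>
    ring

lemma Fmap : (Fmat k).map (aeval fun v : Fin k × Fin 2 => C (σ v) * (1 + X v))
    = ((List.finRange k).map (Gm σ)).prod := by
  have h1 : (Fmat k).map (aeval fun v : Fin k × Fin 2 => C (σ v) * (1 + X v))
      = (AlgHom.mapMatrix (aeval fun v : Fin k × Fin 2 => C (σ v) * (1 + X v))) (Fmat k) := rfl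
  rw [h1, Fmat, map_list_prod, List.map_ofFn]
  congr 1
  rw [List.ofFn_eq_map]
  exact List.map_congr_left fun i _ => factor_map σ i

lemma KDelta : ∀ (L : List (Matrix (Fin 2) (Fin 2) ℤ)),
    (∀ K ∈ L, K = !![3, 2; -2, -1] ∨ K = !![3, -2; 2, -1] ∨
          K = !![5, 2; 2, 1] ∨ K = !![5, -2; -2, 1]) →
    Kp (L.prod 0 0) (L.prod 1 0) (L.prod 0 1) (L.prod 1 1) := by
  intro L
  induction L with
  | nil =>
    intro _
    simp only [List.prod_nil]
    rw [show ((1 : Matrix (Fin 2) (Fin 2) ℤ) 0 0) = 1 from Matrix.one_apply_eq _,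
      show ((1 : Matrix (Fin 2) (Fin 2) ℤ) 1 1) = 1 from Matrix.one_apply_eq _,
      show ((1 : Matrix (Fin 2) (Fin 2) ℤ) 0 1) = 0 from Matrix.one_apply_ne (by decide),
      show ((1 : Matrix (Fin 2) (Fin 2) ℤ) 1 0) = 0 from Matrix.one_apply_ne (by decide)]
    refine ⟨?_, ?_, ?_, ?_⟩ <;> norm_num
  | cons G L ih =>
    intro hL
    have hG := hL G List.mem_cons_self
    obtain ⟨h1, h2, h3, h4⟩ := ih (fun K hK => hL K (List.mem_cons_of_mem _ hK))
    rw [List.prod_cons]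
    rcases hG with rfl | rfl | rfl | rfl <;>
      refine ⟨?_, ?_, ?_, ?_⟩ <;>
      norm_num [Matrix.mul_apply, Fin.sum_univ_two] <;>
      linarith

end Main

end Stmt15Aux

open Stmt15Aux

theorem stmt_15 (L : List (Matrix (Fin 2) (Fin 2) ℤ))
    (hL : ∀ K ∈ L, K = !![3, 2; -2, -1] ∨ K = !![3, -2; 2, -1] ∨
          K = !![5, 2; 2, 1] ∨ K = !![5, -2; -2, 1])
    (k : ℕ) (hk : 1 ≤ k)
    (σ : Fin k × Fin 2 → ℤ) (hσ : ∀ v, σ v = 1 ∨ σ v = -1) :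
    (∀ m, 0 ≤ MvPolynomial.coeff m
        (aeval (fun v : Fin k × Fin 2 => C (σ v) * (1 + X v))
          (C (L.prod 0 0) * Fmat k 0 0 + C (L.prod 1 0) * Fmat k 0 1 +
            C (L.prod 0 1) * Fmat k 1 0 + C (L.prod 1 1) * Fmat k 1 1))) ∨
    (∀ m, MvPolynomial.coeff m
        (aeval (fun v : Fin k × Fin 2 => C (σ v) * (1 + X v))
          (C (L.prod 0 0) * Fmat k 0 0 + C (L.prod 1 0) * Fmat k 0 1 +
            C (L.prod 0 1) * Fmat k 1 0 + C (L.prod 1 1) * Fmat k 1 1)) ≤ 0) := by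
  classical
  have hK := KDelta L hL
  have HN := key σ hσ (List.finRange k) _ _ _ _ hK
  have hF : ∀ r s, (aeval fun v : Fin k × Fin 2 => C (σ v) * (1 + X v)) (Fmat k r s)
      = ((List.finRange k).map (Gm σ)).prod r s := by
    intro r s
    rw [← Fmap σ]
    rfl
  have heq : (aeval (fun v : Fin k × Fin 2 => C (σ v) * (1 + X v)))
        (C (L.prod 0 0) * Fmat k 0 0 + C (L.prod 1 0) * Fmat k 0 1 +
          C (L.prod 0 1) * Fmat k 1 0 + C (L.prod 1 1) * Fmat k 1 1)
      = Tc (L.prod 0 0) (L.prod 1 0) (L.prod 0 1) (L.prod 1 1)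
          (((List.finRange k).map (Gm σ)).prod) := by
    have hC : ∀ n : ℤ, (aeval fun v : Fin k × Fin 2 => C (σ v) * (1 + X v)) (C n)
        = (C n : MvPolynomial (Fin k × Fin 2) ℤ) := by
      intro n
      rw [aeval_C, MvPolynomial.algebraMap_eq]
    simp only [map_add, _root_.map_mul, hF, hC, Tc]
  rcases sgn_pm σ hσ (List.finRange k) with h1 | h1
  · left
    intro m
    have H := HN m
    rw [h1] at H
    rw [heq]
    simpa using H
  · right
    intro m
    have H := HN m
    rw [h1, coeff_C_mul] at H
    rw [heq]
    linarith
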